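/- Let (Q₀,…,Q_t) be an algebraic relation of degree d satisfied by an integral polynomial progression (x, x+P₁(y), …, x+P_t(y)), and write Qᵢ(u) = Σ_{k=0}^{d} b_{ik} binom(u,k). Then the relation is a sum of homogeneous algebraic relations if and only if for every 0 ≤ k ≤ d and 0 ≤ j ≤ k, b_{0k} binom(x,j) + b_{1k} binom(x+P₁(y),j) + … + b_{tk} binom(x+P_t(y),j) = 0 as a polynomial in ℝ[x,y], if and only if for every 0 ≤ k ≤ d and 0 ≤ j ≤ k, b_{0k} x^j + b_{1k}(x+P₁(y))^j + … + b_{tk}(x+P_t(y))^j = 0. -/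

import Mathlib

open Polynomial

/-- The binomial coefficient polynomial `binom(u,k) = u(u-1)⋯(u-k+1)/k!` in `ℝ[u]`. -/
noncomputable def binomPoly (k : ℕ) : Polynomial ℝ :=
  ((k.factorial : ℝ)⁻¹) • descPochhammer ℝ k

/-- The extended progression polynomials: `Pe 0 = 0` (the `x` term) and `Pe i.succ = P i`. -/
noncomputable def Pe (t : ℕ) (P : Fin t → Polynomial ℝ) : Fin (t + 1) → Polynomial ℝ :=
  Fin.cases 0 P

/-- `(Q₀, …, Q_t)` is an algebraic relation satisfied by `(x, x+P₁(y), …, x+P_t(y))`. -/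
def IsRelation (t : ℕ) (P : Fin t → Polynomial ℝ) (Q : Fin (t + 1) → Polynomial ℝ) : Prop :=
  ∑ i : Fin (t + 1), aeval ((X : Polynomial (Polynomial ℝ)) + C (Pe t P i)) (Q i) = 0

/-- A homogeneous algebraic relation: one of the form `(a₀u^d, …, a_t u^d)`. -/
def IsHomRelation (t : ℕ) (P : Fin t → Polynomial ℝ)
    (Q : Fin (t + 1) → Polynomial ℝ) : Prop :=
  IsRelation t P Q ∧ ∃ (d : ℕ) (a : Fin (t + 1) → ℝ), ∀ i, Q i = C (a i) * X ^ d

/-!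
Comparing coefficients of `x` in `∑ aᵢ (x + Pᵢ(y))ⁿ = 0` shows that it amounts to
`∑ aᵢ Pᵢ(y)ᵐ = 0` for all `m ≤ n`; so a homogeneous relation of degree `n` gives, with the same
coefficients, homogeneous relations of every degree `j ≤ n`. The `k`-th coordinate in the basis
`binom(u, k)` is a linear functional that kills `uⁿ` for `n < k`, so along a sum of homogeneous
relations the coordinates `b_{ik}` satisfy `∑ b_{ik} (x + Pᵢ(y))ʲ = 0` for `j ≤ k`. Conversely,
expanding each `binom(u, k)` in monomials writes `Q` as a combination of the homogeneous tuples
`(b_{ik} uᵐ)ᵢ`, `m ≤ k`. The binomial and power forms of the conditions agree because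
`binom(u, j)` and `uʲ` for `j ≤ k` span the same space of polynomials of degree `≤ k`.
-/

lemma binomPoly_degree (k : ℕ) : (binomPoly k).degree = k := by
  rw [binomPoly, smul_eq_C_mul, degree_C_mul (by positivity),
    degree_eq_natDegree (monic_descPochhammer ℝ k).ne_zero, descPochhammer_natDegree]

noncomputable def binomSeq : Polynomial.Sequence ℝ where
  elems' := binomPoly
  degree_eq' := binomPoly_degree

lemma isUnit_binomSeq_leadingCoeff (k : ℕ) : IsUnit (binomSeq k).leadingCoeff :=
  (leadingCoeff_ne_zero.mpr (binomSeq.ne_zero k)).isUnit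

lemma span_binomPoly (n : ℕ) :
    Submodule.span ℝ (binomPoly '' Set.Iic n) = degreeLE ℝ n :=
  binomSeq.span_degreeLE fun k _ => isUnit_binomSeq_leadingCoeff k

noncomputable def binomBasis : Module.Basis ℕ ℝ ℝ[X] :=
  binomSeq.basis isUnit_binomSeq_leadingCoeff

lemma coe_binomBasis : ⇑binomBasis = binomPoly :=
  funext fun k => binomSeq.basis_eq_self isUnit_binomSeq_leadingCoeff k

lemma binomBasis_repr_binomPoly (k m : ℕ) :
    binomBasis.repr (binomPoly k) m = if k = m then 1 else 0 := by
  rw [← coe_binomBasis, binomBasis.repr_self, Finsupp.single_apply]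

lemma binomBasis_repr_X_pow_of_lt {n k : ℕ} (h : n < k) :
    binomBasis.repr (X ^ n) k = 0 := by
  have hmem : X ^ n ∈ Submodule.span ℝ (binomBasis '' Set.Iic n) := by
    rw [coe_binomBasis, span_binomPoly, mem_degreeLE]
    exact degree_X_pow_le n
  rw [← Finsupp.notMem_support_iff]
  exact fun hk => (binomBasis.mem_span_image.mp hmem hk).not_gt h

lemma binomBasis_repr_sum {d k : ℕ} (c : ℕ → ℝ) (hk : k ≤ d) :
    binomBasis.repr (∑ m ∈ Finset.range (d + 1), C (c m) * binomPoly m) k = c k := by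
  simp [← smul_eq_C_mul, binomBasis_repr_binomPoly, Nat.lt_succ_iff.mpr hk]

lemma forall_map_eq_zero_iff_span_le_ker {R M N ι : Type*} [Semiring R] [AddCommMonoid M]
    [Module R M] [AddCommMonoid N] [Module R N] (L : M →ₗ[R] N) (f : ι → M) (s : Set ι) :
    (∀ j ∈ s, L (f j) = 0) ↔ Submodule.span R (f '' s) ≤ LinearMap.ker L := by
  rw [Submodule.span_le, Set.image_subset_iff]
  rfl

lemma span_X_pow_Iic {R : Type*} [CommRing R] (n : ℕ) :
    Submodule.span R ((X ^ ·) '' Set.Iic n) = degreeLE R n := by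
  classical
  rw [degreeLE_eq_span_X_pow, Finset.coe_image, Finset.coe_range, Set.Iio_add_one_eq_Iic]

lemma sum_smul_aeval_binomPoly_eq_zero_iff {A : Type*} [CommRing A] [Algebra ℝ A] {s : ℕ}
    (v : Fin s → ℝ) (S : Fin s → A) (n : ℕ) :
    (∀ j ≤ n, ∑ i, v i • aeval (S i) (binomPoly j) = 0) ↔ ∀ j ≤ n, ∑ i, v i • S i ^ j = 0 := by
  let L : ℝ[X] →ₗ[ℝ] A := ∑ i, v i • (aeval (S i)).toLinearMap
  have hL (p : ℝ[X]) : L p = ∑ i, v i • aeval (S i) p := by simp [L]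
  have hbinom := forall_map_eq_zero_iff_span_le_ker L binomPoly (Set.Iic n)
  have hpow := forall_map_eq_zero_iff_span_le_ker L (X ^ ·) (Set.Iic n)
  simp only [Set.mem_Iic, hL, map_pow, aeval_X] at hbinom hpow
  rw [hbinom, hpow, span_binomPoly, span_X_pow_Iic]

lemma coeff_sum_smul_X_add_C_pow {K R ι : Type*} [Field K] [CommRing R] [Algebra K R]
    [Fintype ι] (v : ι → K) (p : ι → R) (n k : ℕ) :
    (∑ i, v i • (X + C (p i)) ^ n).coeff k = (n.choose k : K) • ∑ i, v i • p i ^ (n - k) := by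
  simp only [finsetSum_coeff, coeff_smul, coeff_X_add_C_pow, Finset.smul_sum]
  refine Finset.sum_congr rfl fun i _ => ?_
  rw [Nat.cast_smul_eq_nsmul, smul_comm, nsmul_eq_mul, mul_comm]

lemma sum_smul_X_add_C_pow_eq_zero_iff {K R ι : Type*} [Field K] [CharZero K] [CommRing R]
    [Algebra K R] [Fintype ι] (v : ι → K) (p : ι → R) (n : ℕ) :
    ∑ i, v i • (X + C (p i)) ^ n = 0 ↔ ∀ m ≤ n, ∑ i, v i • p i ^ m = 0 := by
  constructor
  · intro h m hm
    have hc := coeff_sum_smul_X_add_C_pow v p n (n - m)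
    rw [h, coeff_zero, Nat.sub_sub_self hm, eq_comm, smul_eq_zero] at hc
    exact hc.resolve_left (Nat.cast_ne_zero.mpr (Nat.choose_pos (Nat.sub_le n m)).ne')
  · intro h
    ext k
    rw [coeff_sum_smul_X_add_C_pow, coeff_zero]
    rcases le_or_gt k n with hk | hk
    · rw [h (n - k) (Nat.sub_le n k), smul_zero]
    · rw [Nat.choose_eq_zero_of_lt hk, Nat.cast_zero, zero_smul]

section Relations

variable {t : ℕ} {P : Fin t → ℝ[X]}

lemma isRelation_C_mul_X_pow_iff (a : Fin (t + 1) → ℝ) (n : ℕ) :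
    IsRelation t P (fun i => C (a i) * X ^ n) ↔ ∑ i, a i • (X + C (Pe t P i)) ^ n = 0 := by
  simp [IsRelation, Algebra.smul_def]

lemma IsRelation.C_mul_X_pow_of_le {a : Fin (t + 1) → ℝ} {n j : ℕ}
    (h : IsRelation t P (fun i => C (a i) * X ^ n)) (hj : j ≤ n) :
    IsRelation t P (fun i => C (a i) * X ^ j) := by
  rw [isRelation_C_mul_X_pow_iff, sum_smul_X_add_C_pow_eq_zero_iff] at h ⊢
  exact fun m hm => h m (hm.trans hj)

lemma sum_binomBasis_repr_smul_pow_eq_zero {Q : Fin (t + 1) → ℝ[X]}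
    (hQ : Q ∈ Submodule.span ℝ {Q' | IsHomRelation t P Q'}) {j k : ℕ} (hjk : j ≤ k) :
    ∑ i, binomBasis.repr (Q i) k • (X + C (Pe t P i)) ^ j = 0 := by
  let L : (Fin (t + 1) → ℝ[X]) →ₗ[ℝ] ℝ[X][X] :=
    ∑ i, ((binomBasis.coord k).comp (LinearMap.proj i)).smulRight ((X + C (Pe t P i)) ^ j)
  have hL (Q' : Fin (t + 1) → ℝ[X]) :
      L Q' = ∑ i, binomBasis.repr (Q' i) k • (X + C (Pe t P i)) ^ j := by
    simp [L]
  suffices Submodule.span ℝ {Q' | IsHomRelation t P Q'} ≤ LinearMap.ker L by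
    simpa [hL] using this hQ
  rw [Submodule.span_le]
  rintro Q' ⟨hrel, n, a, hQ'⟩
  obtain rfl : Q' = fun i => C (a i) * X ^ n := funext hQ'
  have hrepr (i : Fin (t + 1)) :
      binomBasis.repr (C (a i) * X ^ n) k = binomBasis.repr (X ^ n) k * a i := by
    rw [← smul_eq_C_mul, map_smul, Finsupp.smul_apply, smul_eq_mul, mul_comm]
  simp only [SetLike.mem_coe, LinearMap.mem_ker, hL, hrepr, mul_smul, ← Finset.smul_sum]
  -- for `k ≤ n` the degree-`n` relation descends to degree `j ≤ k`
  rcases lt_or_ge n k with hnk | hkn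
  · rw [binomBasis_repr_X_pow_of_lt hnk, zero_smul]
  · rw [(isRelation_C_mul_X_pow_iff a j).mp (hrel.C_mul_X_pow_of_le (hjk.trans hkn)), smul_zero]

lemma C_mul_binomPoly_eq_sum (c : ℝ) (k : ℕ) :
    C c * binomPoly k = ∑ m ∈ Finset.range (k + 1), (binomPoly k).coeff m • (C c * X ^ m) := by
  conv_lhs => rw [(binomPoly k).as_sum_range' (k + 1) ((binomSeq.natDegree_eq k).trans_lt k.lt_succ_self)]
  simp only [Finset.mul_sum, ← C_mul_X_pow_eq_monomial, smul_eq_C_mul]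
  exact Finset.sum_congr rfl fun m _ => by ring

lemma mem_span_isHomRelation {d : ℕ} {b : Fin (t + 1) → ℕ → ℝ} {Q : Fin (t + 1) → ℝ[X]}
    (hQ : ∀ i, Q i = ∑ k ∈ Finset.range (d + 1), C (b i k) * binomPoly k)
    (h : ∀ k ≤ d, ∀ j ≤ k, ∑ i, b i k • (X + C (Pe t P i)) ^ j = 0) :
    Q ∈ Submodule.span ℝ {Q' | IsHomRelation t P Q'} := by
  have hexp : Q = ∑ k ∈ Finset.range (d + 1), ∑ m ∈ Finset.range (k + 1),
      (binomPoly k).coeff m • fun i => C (b i k) * X ^ m := by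
    funext i
    simp only [hQ, Finset.sum_apply, Pi.smul_apply, C_mul_binomPoly_eq_sum]
  rw [hexp]
  refine Submodule.sum_mem _ fun k hk => Submodule.sum_mem _ fun m hm => ?_
  refine Submodule.smul_mem _ _ (Submodule.subset_span ⟨?_, m, _, fun i => rfl⟩)
  rw [Finset.mem_range, Nat.lt_succ_iff] at hk hm
  exact (isRelation_C_mul_X_pow_iff _ m).mpr (h k hk m hm)

end Relations

theorem stmt12_general (t : ℕ) (P : Fin t → Polynomial ℝ)
    (d : ℕ) (b : Fin (t + 1) → ℕ → ℝ) (Q : Fin (t + 1) → Polynomial ℝ)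
    (hQ : ∀ i, Q i = ∑ k ∈ Finset.range (d + 1), C (b i k) * binomPoly k) :
    (Q ∈ Submodule.span ℝ {Q' | IsHomRelation t P Q'} ↔
      (∀ k ≤ d, ∀ j ≤ k, ∑ i : Fin (t + 1),
        b i k • aeval ((X : Polynomial (Polynomial ℝ)) + C (Pe t P i)) (binomPoly j) = 0)) ∧
    ((∀ k ≤ d, ∀ j ≤ k, ∑ i : Fin (t + 1),
        b i k • aeval ((X : Polynomial (Polynomial ℝ)) + C (Pe t P i)) (binomPoly j) = 0) ↔
      (∀ k ≤ d, ∀ j ≤ k, ∑ i : Fin (t + 1),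
        b i k • ((X : Polynomial (Polynomial ℝ)) + C (Pe t P i)) ^ j = 0)) := by
  have hpow := forall₂_congr fun k (_ : k ≤ d) =>
    sum_smul_aeval_binomPoly_eq_zero_iff (b · k) (fun i => X + C (Pe t P i)) k
  refine ⟨?_, hpow⟩
  rw [hpow]
  refine ⟨fun hspan k hk j hj => ?_, mem_span_isHomRelation hQ⟩
  simpa only [hQ, binomBasis_repr_sum _ hk] using sum_binomBasis_repr_smul_pow_eq_zero hspan hj

/-- Equivalent descriptions of relations that are sums of homogeneous relations:
in terms of the Taylor (binomial) basis coefficients and in terms of powers. -/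
theorem stmt12 (t : ℕ) (ht : 0 < t) (P : Fin t → Polynomial ℝ)
    (hint : ∀ i, (∀ n : ℤ, ∃ m : ℤ, (P i).eval (n : ℝ) = m) ∧ (P i).eval 0 = 0)
    (hinj : Function.Injective P)
    (d : ℕ) (b : Fin (t + 1) → ℕ → ℝ) (Q : Fin (t + 1) → Polynomial ℝ)
    (hQ : ∀ i, Q i = ∑ k ∈ Finset.range (d + 1), C (b i k) * binomPoly k)
    (hrel : IsRelation t P Q) :
    (Q ∈ Submodule.span ℝ {Q' | IsHomRelation t P Q'} ↔
      (∀ k ≤ d, ∀ j ≤ k, ∑ i : Fin (t + 1),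
        b i k • aeval ((X : Polynomial (Polynomial ℝ)) + C (Pe t P i)) (binomPoly j) = 0)) ∧
    ((∀ k ≤ d, ∀ j ≤ k, ∑ i : Fin (t + 1),
        b i k • aeval ((X : Polynomial (Polynomial ℝ)) + C (Pe t P i)) (binomPoly j) = 0) ↔
      (∀ k ≤ d, ∀ j ≤ k, ∑ i : Fin (t + 1),
        b i k • ((X : Polynomial (Polynomial ℝ)) + C (Pe t P i)) ^ j = 0)) :=
  stmt12_general t P d b Q hQ
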